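/- Let μ be a probability measure on ℝ^d, let f, g : ℝ^d → ℝ^k be measurable with ‖f(x) - g(x)‖ ≤ C·2^{-m} for all x. Then |H(f μ, 𝒟_m) - H(g μ, 𝒟_m)| ≤ C' where C' depends only on C and k. -/

import Mathlib

/-!
Refining the partition `{f⁻¹ Q}` by `{g⁻¹ Q'}` can only increase entropy. Conversely, since
`f` and `g` are `C 2^{-m}`-close, each cell `g⁻¹ Q'` meets at most `(2⌈C⌉ + 1)^k` cells
`f⁻¹ Q`, and by concavity of `x ↦ -x log x`, splitting a cell of mass `p` into at most `N`
pieces adds at most `p log N` to the entropy. Hence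
`H(fμ) ≤ H(fμ ∨ gμ) ≤ H(gμ) + k log(2⌈C⌉ + 1)`, and symmetrically.
-/

open MeasureTheory ENNReal

/-- Entropy of a measure on `ℝ^k` with respect to the partition into dyadic cubes of
side `2^{-m}`. -/
noncomputable def cubeEntropy {k : ℕ} (θ : Measure (Fin k → ℝ)) (m : ℕ) : ℝ≥0∞ :=
  ∑' a : Fin k → ℤ, ENNReal.ofReal (Real.negMulLog
    (θ {x | ∀ j, x j ∈ Set.Ico ((a j : ℝ) * 2 ^ (-(m : ℤ)))
      (((a j : ℝ) + 1) * 2 ^ (-(m : ℤ)))}).toReal)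

open scoped Finset

lemma Real.mul_neg_log_le_negMulLog {x p : ℝ} (hx : 0 ≤ x) (hxp : x ≤ p) :
    x * -Real.log p ≤ Real.negMulLog x := by
  rcases hx.eq_or_lt with rfl | hx
  · simp
  rw [Real.negMulLog, neg_mul, ← mul_neg]
  exact mul_le_mul_of_nonneg_left (neg_le_neg (Real.log_le_log hx hxp)) hx.le

lemma Real.sum_negMulLog_le {ι : Type*} {S : Finset ι} {N : ℕ} (hS : #S ≤ N) {x : ι → ℝ}
    (hx : ∀ i ∈ S, 0 ≤ x i) :
    ∑ i ∈ S, Real.negMulLog (x i)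
      ≤ Real.negMulLog (∑ i ∈ S, x i) + (∑ i ∈ S, x i) * Real.log N := by
  rcases S.eq_empty_or_nonempty with rfl | hne
  · simp
  have hn : (0 : ℝ) < #S := by exact_mod_cast hne.card_pos
  have jensen := Real.concaveOn_negMulLog.le_map_sum (t := S) (w := fun _ => (#S : ℝ)⁻¹)
    (p := x) (fun _ _ => by positivity) (by simp [hn.ne']) hx
  rw [← Finset.smul_sum, ← Finset.smul_sum, smul_eq_mul, smul_eq_mul, Real.negMulLog_mul,
    Real.negMulLog, Real.log_inv] at jensen
  have hlog : (∑ i ∈ S, x i) * Real.log #S ≤ (∑ i ∈ S, x i) * Real.log N :=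
    mul_le_mul_of_nonneg_left (Real.log_le_log hn (by exact_mod_cast hS)) (Finset.sum_nonneg hx)
  have := mul_le_mul_of_nonneg_left jensen hn.le
  field_simp at this
  linarith

lemma ENNReal.ofReal_negMulLog_tsum_le {κ : Type*} {r : κ → ℝ≥0∞} (hr : ∑' j, r j ≠ ∞) :
    ENNReal.ofReal (Real.negMulLog (∑' j, r j).toReal)
      ≤ ∑' j, ENNReal.ofReal (Real.negMulLog (r j).toReal) := by
  set p := (∑' j, r j).toReal
  have hr_ne_top (j : κ) : r j ≠ ∞ := ne_top_of_le_ne_top hr (ENNReal.le_tsum j)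
  calc ENNReal.ofReal (Real.negMulLog p)
      = (∑' j, r j) * ENNReal.ofReal (-Real.log p) := by
        rw [Real.negMulLog, neg_mul, ← mul_neg, ENNReal.ofReal_mul toReal_nonneg,
          ofReal_toReal hr]
    _ = ∑' j, ENNReal.ofReal ((r j).toReal * -Real.log p) := by
        rw [← ENNReal.tsum_mul_right]
        refine tsum_congr fun j => ?_
        rw [ENNReal.ofReal_mul toReal_nonneg, ofReal_toReal (hr_ne_top j)]
    _ ≤ _ := ENNReal.tsum_le_tsum fun j => ENNReal.ofReal_le_ofReal <|
        Real.mul_neg_log_le_negMulLog toReal_nonneg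
          (ENNReal.toReal_mono hr (ENNReal.le_tsum j))

lemma ENNReal.sum_ofReal_negMulLog_le {ι : Type*} {S : Finset ι} {N : ℕ} (hS : #S ≤ N)
    {r : ι → ℝ≥0∞} (hr : ∑ i ∈ S, r i ≤ 1) :
    ∑ i ∈ S, ENNReal.ofReal (Real.negMulLog (r i).toReal)
      ≤ ENNReal.ofReal (Real.negMulLog (∑ i ∈ S, r i).toReal)
        + (∑ i ∈ S, r i) * ENNReal.ofReal (Real.log N) := by
  have hr_le_one (i : ι) (hi : i ∈ S) : r i ≤ 1 :=
    (Finset.single_le_sum (fun _ _ => zero_le) hi).trans hr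
  have hr_ne_top (i : ι) (hi : i ∈ S) : r i ≠ ∞ := ne_top_of_le_ne_top one_ne_top (hr_le_one i hi)
  have hsum_ne_top : ∑ i ∈ S, r i ≠ ∞ := ne_top_of_le_ne_top one_ne_top hr
  rw [← ENNReal.ofReal_sum_of_nonneg fun i hi => Real.negMulLog_nonneg toReal_nonneg
      (toReal_le_of_le_ofReal zero_le_one (by simpa using hr_le_one i hi)),
    ← ofReal_toReal hsum_ne_top, ← ENNReal.ofReal_mul toReal_nonneg, ofReal_toReal hsum_ne_top,
    ← ENNReal.ofReal_add (Real.negMulLog_nonneg toReal_nonneg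
      (toReal_le_of_le_ofReal zero_le_one (by simpa using hr)))
      (mul_nonneg toReal_nonneg (Real.log_natCast_nonneg N)),
    ENNReal.toReal_sum hr_ne_top]
  exact ENNReal.ofReal_le_ofReal (Real.sum_negMulLog_le hS fun _ _ => toReal_nonneg)

section FiberEntropy

variable {Ω ι κ : Type*} [MeasurableSpace Ω]

lemma MeasureTheory.tsum_measure_inter_preimage_singleton [MeasurableSpace κ]
    [MeasurableSingletonClass κ] [Countable κ] (μ : Measure Ω) {ψ : Ω → κ} (hψ : Measurable ψ)
    (A : Set Ω) : ∑' j, μ (A ∩ ψ ⁻¹' {j}) = μ A := by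
  have hcover : ⋃ j, ψ ⁻¹' {j} = Set.univ := by
    rw [← Set.preimage_iUnion, Set.iUnion_of_singleton, Set.preimage_univ]
  have := measure_iUnion (μ := μ.restrict A) (pairwise_disjoint_fiber ψ)
    fun j => hψ (measurableSet_singleton j)
  rw [hcover, Measure.restrict_apply_univ] at this
  simpa only [Measure.restrict_apply (hψ (measurableSet_singleton _)), Set.inter_comm]
    using this.symm

noncomputable def fiberEntropy (μ : Measure Ω) (φ : Ω → ι) : ℝ≥0∞ :=
  ∑' i, ENNReal.ofReal (Real.negMulLog (μ (φ ⁻¹' {i})).toReal)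

lemma fiberEntropy_map {α : Type*} [MeasurableSpace α] [MeasurableSpace ι]
    [MeasurableSingletonClass ι] (μ : Measure α) {f : α → Ω} (hf : Measurable f) {φ : Ω → ι}
    (hφ : Measurable φ) : fiberEntropy (μ.map f) φ = fiberEntropy μ (φ ∘ f) := by
  simp only [fiberEntropy, Measure.map_apply hf (hφ (measurableSet_singleton _)),
    Set.preimage_comp]

omit [MeasurableSpace Ω] in
lemma preimage_pair_singleton (φ : Ω → ι) (ψ : Ω → κ) (i : ι) (j : κ) :
    (fun x => (φ x, ψ x)) ⁻¹' {(i, j)} = φ ⁻¹' {i} ∩ ψ ⁻¹' {j} := by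
  rw [← Set.singleton_prod_singleton, Set.mk_preimage_prod]

lemma fiberEntropy_le_fiberEntropy_pair [MeasurableSpace κ] [MeasurableSingletonClass κ]
    [Countable κ] (μ : Measure Ω) [IsFiniteMeasure μ] (φ : Ω → ι) {ψ : Ω → κ}
    (hψ : Measurable ψ) : fiberEntropy μ φ ≤ fiberEntropy μ (fun x => (φ x, ψ x)) := by
  rw [fiberEntropy, fiberEntropy, ENNReal.tsum_prod']
  refine ENNReal.tsum_le_tsum fun i => ?_
  simp only [preimage_pair_singleton]
  rw [← tsum_measure_inter_preimage_singleton μ hψ (φ ⁻¹' {i})]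
  exact ENNReal.ofReal_negMulLog_tsum_le
    ((tsum_measure_inter_preimage_singleton μ hψ _).trans_ne (measure_ne_top μ _))

lemma fiberEntropy_pair_le_add_log [MeasurableSpace ι] [MeasurableSingletonClass ι] [Countable ι]
    [MeasurableSpace κ] [MeasurableSingletonClass κ] [Countable κ]
    (μ : Measure Ω) [IsProbabilityMeasure μ] {φ : Ω → ι} {ψ : Ω → κ}
    (hφ : Measurable φ) (hψ : Measurable ψ) {S : κ → Finset ι} {N : ℕ}
    (hS : ∀ x, φ x ∈ S (ψ x)) (hN : ∀ j, #(S j) ≤ N) :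
    fiberEntropy μ (fun x => (φ x, ψ x)) ≤ fiberEntropy μ ψ + ENNReal.ofReal (Real.log N) := by
  have hempty (j : κ) (i : ι) (hi : i ∉ S j) : φ ⁻¹' {i} ∩ ψ ⁻¹' {j} = ∅ :=
    Set.eq_empty_iff_forall_notMem.mpr fun x ⟨hxi, hxj⟩ => hi (hxi ▸ hxj ▸ hS x)
  have hfiber (j : κ) : ∑ i ∈ S j, μ (φ ⁻¹' {i} ∩ ψ ⁻¹' {j}) = μ (ψ ⁻¹' {j}) := by
    rw [← tsum_measure_inter_preimage_singleton μ hφ (ψ ⁻¹' {j}), eq_comm]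
    simp only [Set.inter_comm (ψ ⁻¹' {j})]
    exact tsum_eq_sum fun i hi => by rw [hempty j i hi, measure_empty]
  calc fiberEntropy μ (fun x => (φ x, ψ x))
      = ∑' j, ∑ i ∈ S j, ENNReal.ofReal (Real.negMulLog (μ (φ ⁻¹' {i} ∩ ψ ⁻¹' {j})).toReal) := by
        simp only [fiberEntropy, ENNReal.tsum_prod', preimage_pair_singleton]
        rw [ENNReal.tsum_comm]
        refine tsum_congr fun j => tsum_eq_sum fun i hi => ?_
        simp [hempty j i hi]
    _ ≤ ∑' j, (ENNReal.ofReal (Real.negMulLog (μ (ψ ⁻¹' {j})).toReal)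
          + μ (ψ ⁻¹' {j}) * ENNReal.ofReal (Real.log N)) :=
        ENNReal.tsum_le_tsum fun j => by
          simpa only [hfiber j] using
            ENNReal.sum_ofReal_negMulLog_le (hN j) ((hfiber j).trans_le prob_le_one)
    _ = fiberEntropy μ ψ + ENNReal.ofReal (Real.log N) := by
        have htotal : ∑' j, μ (ψ ⁻¹' {j}) = 1 := by
          simpa using tsum_measure_inter_preimage_singleton μ hψ Set.univ
        rw [ENNReal.tsum_add, ENNReal.tsum_mul_right, htotal, one_mul, fiberEntropy]

theorem fiberEntropy_le_add_log [MeasurableSpace ι] [MeasurableSingletonClass ι] [Countable ι]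
    [MeasurableSpace κ] [MeasurableSingletonClass κ] [Countable κ]
    (μ : Measure Ω) [IsProbabilityMeasure μ] {φ : Ω → ι} {ψ : Ω → κ}
    (hφ : Measurable φ) (hψ : Measurable ψ) {S : κ → Finset ι} {N : ℕ}
    (hS : ∀ x, φ x ∈ S (ψ x)) (hN : ∀ j, #(S j) ≤ N) :
    fiberEntropy μ φ ≤ fiberEntropy μ ψ + ENNReal.ofReal (Real.log N) :=
  (fiberEntropy_le_fiberEntropy_pair μ φ hψ).trans (fiberEntropy_pair_le_add_log μ hφ hψ hS hN)

end FiberEntropy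

lemma Int.floor_sub_floor_le_natCeil {a b C : ℝ} (h : a - b ≤ C) : ⌊a⌋ - ⌊b⌋ ≤ (⌈C⌉₊ : ℤ) := by
  have : ((⌊a⌋ - ⌊b⌋ : ℤ) : ℝ) < (⌈C⌉₊ : ℤ) + 1 := by
    push_cast
    linarith [Int.floor_le a, Int.lt_floor_add_one b, Nat.le_ceil C]
  exact_mod_cast Int.lt_add_one_iff.mp (by exact_mod_cast this)

section DyadicCubes

variable {k : ℕ}

noncomputable def dyadicIndex (m : ℕ) (y : Fin k → ℝ) : Fin k → ℤ :=
  fun j => ⌊y j * 2 ^ m⌋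

lemma measurable_dyadicIndex (m : ℕ) : Measurable (dyadicIndex (k := k) m) :=
  measurable_pi_lambda _ fun j => Int.measurable_floor.comp ((measurable_pi_apply j).mul_const _)

lemma preimage_dyadicIndex_singleton (m : ℕ) (a : Fin k → ℤ) :
    dyadicIndex m ⁻¹' {a} = {x | ∀ j, x j ∈ Set.Ico ((a j : ℝ) * 2 ^ (-(m : ℤ)))
      (((a j : ℝ) + 1) * 2 ^ (-(m : ℤ)))} := by
  ext y
  simp only [Set.mem_preimage, Set.mem_singleton_iff, funext_iff, dyadicIndex, Int.floor_eq_iff,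
    Set.mem_ofPred_eq, Set.mem_Ico, zpow_neg, zpow_natCast, ← div_eq_mul_inv]
  refine forall_congr' fun j => ?_
  rw [div_le_iff₀ (by positivity), lt_div_iff₀ (by positivity)]

lemma cubeEntropy_eq_fiberEntropy (θ : Measure (Fin k → ℝ)) (m : ℕ) :
    cubeEntropy θ m = fiberEntropy θ (dyadicIndex m) := by
  simp only [cubeEntropy, fiberEntropy, preimage_dyadicIndex_singleton]

lemma dyadicIndex_mem_Icc {C : ℝ} {m : ℕ} {y z : Fin k → ℝ} (h : ‖y - z‖ ≤ C * 2 ^ (-(m : ℤ))) :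
    dyadicIndex m y ∈ Finset.Icc (dyadicIndex m z - fun _ => (⌈C⌉₊ : ℤ))
      (dyadicIndex m z + fun _ => (⌈C⌉₊ : ℤ)) := by
  have hcoord (j : Fin k) : |y j * 2 ^ m - z j * 2 ^ m| ≤ C := by
    have hscale : (2 : ℝ) ^ (-(m : ℤ)) * 2 ^ m = 1 := by
      rw [zpow_neg, zpow_natCast, inv_mul_cancel₀ (by positivity)]
    rw [← sub_mul, abs_mul, abs_of_pos (pow_pos two_pos m : (0 : ℝ) < 2 ^ m)]
    calc |y j - z j| * 2 ^ m ≤ C * 2 ^ (-(m : ℤ)) * 2 ^ m := by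
          gcongr; exact (norm_le_pi_norm (y - z) j).trans h
      _ = C := by rw [mul_assoc, hscale, mul_one]
  rw [Finset.mem_Icc]
  constructor <;> intro j <;> obtain ⟨hlow, hupp⟩ := abs_le.mp (hcoord j) <;>
    simp only [Pi.sub_apply, Pi.add_apply, dyadicIndex]
  · have := Int.floor_sub_floor_le_natCeil (show z j * 2 ^ m - y j * 2 ^ m ≤ C by linarith)
    linarith
  · linarith [Int.floor_sub_floor_le_natCeil hupp]

lemma card_Icc_sub_add_const (b : Fin k → ℤ) (L : ℕ) :
    #(Finset.Icc (b - fun _ => (L : ℤ)) (b + fun _ => (L : ℤ))) = (2 * L + 1) ^ k := by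
  have hwidth (j : Fin k) : (b j + L + 1 - (b j - L)).toNat = 2 * L + 1 := by omega
  simp only [Pi.card_Icc, Pi.sub_apply, Pi.add_apply, Int.card_Icc, hwidth, Finset.prod_const,
    Finset.card_univ, Fintype.card_fin]

theorem cubeEntropy_map_le_add {α : Type*} [MeasurableSpace α] (μ : Measure α)
    [IsProbabilityMeasure μ] {f g : α → Fin k → ℝ} (hf : Measurable f) (hg : Measurable g)
    {C : ℝ} {m : ℕ} (hfg : ∀ x, ‖f x - g x‖ ≤ C * 2 ^ (-(m : ℤ))) :
    cubeEntropy (μ.map f) m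
      ≤ cubeEntropy (μ.map g) m + ENNReal.ofReal (Real.log ((2 * ⌈C⌉₊ + 1) ^ k : ℕ)) := by
  simp only [cubeEntropy_eq_fiberEntropy, fiberEntropy_map μ hf (measurable_dyadicIndex m),
    fiberEntropy_map μ hg (measurable_dyadicIndex m)]
  exact fiberEntropy_le_add_log μ ((measurable_dyadicIndex m).comp hf)
    ((measurable_dyadicIndex m).comp hg) (fun x => dyadicIndex_mem_Icc (hfg x))
    fun b => (card_Icc_sub_add_const b _).le

end DyadicCubes

/-- If `f, g : ℝ^d → ℝ^k` satisfy `‖f(x) - g(x)‖ ≤ C 2^{-m}` for all `x`, then the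
pushforwards of any probability measure `μ` satisfy
`|H(fμ, 𝒟_m) - H(gμ, 𝒟_m)| ≤ C'` with `C'` depending only on `C` and `k`. -/
theorem cubeEntropy_map_close (C : ℝ) (k : ℕ) :
    ∃ C' : ℝ, ∀ (d : ℕ) (μ : Measure (Fin d → ℝ)), IsProbabilityMeasure μ →
      ∀ (f g : (Fin d → ℝ) → (Fin k → ℝ)), Measurable f → Measurable g →
      ∀ m : ℕ, (∀ x, ‖f x - g x‖ ≤ C * 2 ^ (-(m : ℤ))) →
        cubeEntropy (μ.map f) m ≤ cubeEntropy (μ.map g) m + ENNReal.ofReal C' ∧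
        cubeEntropy (μ.map g) m ≤ cubeEntropy (μ.map f) m + ENNReal.ofReal C' := by
  refine ⟨Real.log ((2 * ⌈C⌉₊ + 1) ^ k : ℕ), fun d μ _ f g hf hg m hfg => ⟨?_, ?_⟩⟩
  · exact cubeEntropy_map_le_add μ hf hg hfg
  · exact cubeEntropy_map_le_add μ hg hf fun x => norm_sub_rev (f x) (g x) ▸ hfg x
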